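/- arXiv:2604.04835 — 3 statements merged into one kernel-verified Lean document; each statement's English description precedes it below -/
import Mathlib

section
/- Let φ : Γ → ℂ be a positive-definite function on a group Γ with φ(e) = 1, and let (π, H, ξ) be its GNS triple, so that ⟨π(g)ξ, π(h)ξ⟩ = φ(h⁻¹g) for all g, h ∈ Γ. Fix g ∈ Γ and suppose there is an infinite sequence (nᵢ) in Γ such that φ(nⱼ⁻¹ g nⱼ · nᵢ⁻¹ g⁻¹ nᵢ) = 0 for all i ≠ j, and φ(nᵢ⁻¹ g⁻¹ nᵢ) = φ(g⁻¹) for all i, and |φ(g⁻¹)| = |φ(g)|. Then φ(g) = 0. -/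
open scoped InnerProductSpace ComplexOrder

/-- Bessel's inequality makes `i ↦ ‖⟪w i, x⟫‖²` summable, and a constant family over an infinite
index type is summable only if it vanishes. -/
theorem Orthonormal.eq_zero_of_forall_norm_inner_eq {𝕜 E ι : Type*} [RCLike 𝕜]
    [NormedAddCommGroup E] [InnerProductSpace 𝕜 E] [Infinite ι] {w : ι → E}
    (hw : Orthonormal 𝕜 w) (x : E) {c : ℝ} (hc : ∀ i, ‖⟪w i, x⟫_𝕜‖ = c) : c = 0 := by
  have hsum : Summable fun _ : ι => c ^ 2 := by
    simpa only [hc] using hw.inner_products_summable (x := x)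
  exact pow_eq_zero_iff two_ne_zero |>.mp (summable_const_iff _ |>.mp hsum)

theorem orthonormal_comp_of_pairwise_eq_zero {Γ H ι : Type*} [Group Γ] {φ : Γ → ℂ}
    [NormedAddCommGroup H] [InnerProductSpace ℂ H] {v : Γ → H} (hφe : φ 1 = 1)
    (hGNS : ∀ g h : Γ, ⟪v h, v g⟫_ℂ = φ (h⁻¹ * g)) {a : ι → Γ}
    (ha : Pairwise fun i j => φ ((a i)⁻¹ * a j) = 0) : Orthonormal ℂ (v ∘ a) := by
  classical
  rw [orthonormal_iff_ite]
  intro i j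
  split_ifs with hij
  · rw [hij, Function.comp_apply, hGNS, inv_mul_cancel, hφe]
  · rw [Function.comp_apply, Function.comp_apply, hGNS]
    exact ha hij

theorem stmt4_general {Γ : Type*} [Group Γ] (φ : Γ → ℂ) (hφe : φ 1 = 1)
    {H : Type*} [NormedAddCommGroup H] [InnerProductSpace ℂ H]
    (v : Γ → H)
    (hGNS : ∀ g h : Γ, ⟪v h, v g⟫_ℂ = φ (h⁻¹ * g))
    (g : Γ) (n : ℕ → Γ)
    (h1 : ∀ i j : ℕ, i ≠ j →
      φ ((n j)⁻¹ * g * n j * ((n i)⁻¹ * g⁻¹ * n i)) = 0)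
    (h2 : ∀ i : ℕ, φ ((n i)⁻¹ * g⁻¹ * n i) = φ g⁻¹)
    (h3 : ‖φ g⁻¹‖ = ‖φ g‖) :
    φ g = 0 := by
  set a : ℕ → Γ := fun i => (n i)⁻¹ * g⁻¹ * n i
  have hw : Orthonormal ℂ (v ∘ a) := by
    refine orthonormal_comp_of_pairwise_eq_zero hφe hGNS fun i j hij => ?_
    have hconj : (a i)⁻¹ * a j = (n i)⁻¹ * g * n i * ((n j)⁻¹ * g⁻¹ * n j) := by
      simp only [a]
      group
    show φ _ = 0
    rw [hconj]
    exact h1 j i hij.symm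
  have hinner : ∀ i, ‖⟪(v ∘ a) i, v 1⟫_ℂ‖ = ‖φ g‖ := by
    intro i
    rw [← inner_conj_symm, RCLike.norm_conj, Function.comp_apply, hGNS, inv_one, one_mul, h2, h3]
  exact norm_eq_zero.mp (hw.eq_zero_of_forall_norm_inner_eq (v 1) hinner)

/-- GNS vanishing. Let φ be a normalized positive-definite function on Γ
with GNS data (H, v, ξ) where v g = π(g)ξ and ⟨v g, v h⟩ = φ(h⁻¹g). If for some g
there is a sequence (nᵢ) with φ(nⱼ⁻¹ g nⱼ nᵢ⁻¹ g⁻¹ nᵢ) = 0 for i ≠ j,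
φ(nᵢ⁻¹ g⁻¹ nᵢ) = φ(g⁻¹), and |φ(g⁻¹)| = |φ(g)|, then φ(g) = 0. -/
theorem stmt4 {Γ : Type*} [Group Γ] (φ : Γ → ℂ) (hφe : φ 1 = 1)
    (hpd : ∀ (m : ℕ) (gs : Fin m → Γ) (cs : Fin m → ℂ),
      0 ≤ ∑ i, ∑ j, cs i * (starRingEnd ℂ) (cs j) * φ ((gs j)⁻¹ * gs i))
    {H : Type*} [NormedAddCommGroup H] [InnerProductSpace ℂ H]
    (v : Γ → H) (ξ : H) (hξ : ξ = v 1)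
    (hGNS : ∀ g h : Γ, ⟪v h, v g⟫_ℂ = φ (h⁻¹ * g))
    (g : Γ) (n : ℕ → Γ)
    (h1 : ∀ i j : ℕ, i ≠ j →
      φ ((n j)⁻¹ * g * n j * ((n i)⁻¹ * g⁻¹ * n i)) = 0)
    (h2 : ∀ i : ℕ, φ ((n i)⁻¹ * g⁻¹ * n i) = φ g⁻¹)
    (h3 : ‖φ g⁻¹‖ = ‖φ g‖) :
    φ g = 0 :=
  stmt4_general φ hφe v hGNS g n h1 h2 h3
end

section
/- Let P ⊆ Q be an inclusion of von Neumann algebras with (Q, τ) a tracial factor (or just: with faithful trace τ and τ-preserving conditional expectation E_P), and suppose u ∈ Q is a unitary with uPu* ⊆ P, the center Z(P) = ℂ·1, P ∩ (P' ∩ Q) = ℂ·1, and E_P(u) ≠ 0. Then u factors as u = a·b where a is a unitary in P and b is a unitary in P' ∩ Q; explicitly a = c⁻¹ᐟ² E_P(u) for the positive scalar c with E_P(u)*E_P(u) = c·1. -/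
/-!
Bimodularity of `E` and `u P u* ⊆ P` give `E u * p = (u p u*) * E u` for `p ∈ P`, so `u* E(u)`
lies in `P' ∩ Q`, and so does its adjoint because `P` is `*`-closed. Hence
`E(u)* E(u) = (u* E(u))* (u* E(u))` lies in `P ∩ (P' ∩ Q) = ℂ`; by faithfulness and positivity of
`τ` it is `c • 1` with `c > 0`. Then `a = c^{-1/2} E(u)` is an isometry in `P`, a unitary because
`τ (1 - a a*) = 0`, and `b = a* u = c^{-1/2} (u* E(u))*` is a unitary in `P' ∩ Q`.
-/

section Expectation

variable {R Q : Type*} [CommSemiring R] [Semiring Q] [StarRing Q] [Algebra R Q]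
  {P : Subalgebra R Q} {E : Q → Q}

theorem Subalgebra.star_mem_of_star_retraction (hrange : ∀ q, E q ∈ P) (hid : ∀ p ∈ P, E p = p)
    (hEstar : ∀ x, E (star x) = star (E x)) {p : Q} (hp : p ∈ P) : star p ∈ P := by
  simpa only [hEstar, hid p hp] using hrange (star p)

theorem commute_star_mul_apply_self
    (hbimod : ∀ a ∈ P, ∀ b ∈ P, ∀ q : Q, E (a * q * b) = a * E q * b)
    {u : Q} (hu : star u * u = 1) (hconj : ∀ p ∈ P, u * p * star u ∈ P) {p : Q} (hp : p ∈ P) :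
    Commute (star u * E u) p := by
  have hright : E (u * p) = E u * p := by
    simpa only [one_mul] using hbimod 1 P.one_mem p hp u
  have hleft : E (u * p) = u * p * star u * E u := by
    have h := hbimod _ (hconj p hp) 1 P.one_mem u
    rwa [mul_one, mul_one, mul_assoc _ (star u), hu, mul_one] at h
  calc star u * E u * p = star u * (u * p * star u * E u) := by rw [mul_assoc, ← hright, hleft]
    _ = p * (star u * E u) := by simp only [← mul_assoc, hu, one_mul]

end Expectation

theorem commute_star_of_forall_star_mem {Q : Type*} [Mul Q] [StarMul Q] {S : Set Q}
    (hS : ∀ p ∈ S, star p ∈ S) {w : Q} (hw : ∀ p ∈ S, Commute w p) {p : Q} (hp : p ∈ S) :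
    Commute (star w) p := by
  simpa only [star_star] using (hw _ (hS p hp)).star_star

section Trace

variable {Q : Type*} [Ring Q] [StarRing Q] [Module ℂ Q] (τ : Q →ₗ[ℂ] ℂ)

theorem exists_pos_of_star_mul_self_eq_smul_one (hτ1 : τ 1 = 1)
    (hpos : ∀ x : Q, 0 ≤ (τ (star x * x)).re ∧ (τ (star x * x)).im = 0)
    (hfaith : ∀ x : Q, τ (star x * x) = 0 → x = 0) {x : Q} (hx : x ≠ 0) {s : ℂ}
    (hs : star x * x = s • (1 : Q)) : ∃ c : ℝ, 0 < c ∧ star x * x = (c : ℂ) • (1 : Q) := by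
  have hτs : τ (star x * x) = s := by rw [hs, map_smul, hτ1, smul_eq_mul, mul_one]
  obtain ⟨hre, him⟩ := hpos x
  rw [hτs] at hre him
  have hs_real : s = (s.re : ℂ) := Complex.ext rfl him
  refine ⟨s.re, hre.lt_of_ne fun h => hx (hfaith x ?_), hs_real ▸ hs⟩
  rw [hτs, hs_real, ← h, Complex.ofReal_zero]

theorem mul_star_self_eq_one_of_star_mul_self_eq_one (htrace : ∀ a b : Q, τ (a * b) = τ (b * a))
    (hfaith : ∀ x : Q, τ (star x * x) = 0 → x = 0) {a : Q} (ha : star a * a = 1) :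
    a * star a = 1 := by
  set e := 1 - a * star a
  have he_idem : star e * e = e := by
    have hproj : a * star a * (a * star a) = a * star a := by
      rw [mul_assoc, ← mul_assoc (star a), ha, one_mul]
    calc star e * e = 1 - a * star a - a * star a + a * star a * (a * star a) := by
          simp only [e, star_sub, star_one, star_mul, star_star]; noncomm_ring
      _ = e := by rw [hproj, sub_add_cancel]
  have hτe : τ (star e * e) = 0 := by
    rw [he_idem, map_sub, htrace, ha, sub_self]
  exact (sub_eq_zero.mp (hfaith e hτe)).symm

end Trace

theorem star_mul_self_inv_sqrt_smul_eq_one {Q : Type*} [Ring Q] [StarRing Q] [Algebra ℂ Q] [StarModule ℂ Q]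
    {x : Q} {c : ℝ} (hc : 0 < c) (hx : star x * x = (c : ℂ) • (1 : Q)) :
    star (((Real.sqrt c)⁻¹ : ℂ) • x) * (((Real.sqrt c)⁻¹ : ℂ) • x) = 1 := by
  have hconj : star ((Real.sqrt c)⁻¹ : ℂ) = (Real.sqrt c)⁻¹ := by
    rw [← Complex.ofReal_inv]; exact Complex.conj_ofReal _
  have hscalar : (Real.sqrt c)⁻¹ * (Real.sqrt c)⁻¹ * c = 1 := by
    rw [← mul_inv, Real.mul_self_sqrt hc.le, inv_mul_cancel₀ hc.ne']
  rw [star_smul, hconj, smul_mul_smul_comm, hx, smul_smul, ← Complex.ofReal_inv,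
    ← Complex.ofReal_mul, ← Complex.ofReal_mul, hscalar, Complex.ofReal_one, one_smul]

theorem stmt8_general {Q : Type*} [Ring Q] [Algebra ℂ Q] [StarRing Q] [StarModule ℂ Q]
    (P : Subalgebra ℂ Q)
    (τ : Q →ₗ[ℂ] ℂ) (hτ1 : τ 1 = 1)
    (htrace : ∀ a b : Q, τ (a * b) = τ (b * a))
    (hpos : ∀ x : Q, 0 ≤ (τ (star x * x)).re ∧ (τ (star x * x)).im = 0)
    (hfaith : ∀ x : Q, τ (star x * x) = 0 → x = 0)
    (E : Q →ₗ[ℂ] Q)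
    (hrange : ∀ q : Q, E q ∈ P) (hid : ∀ p ∈ P, E p = p)
    (hbimod : ∀ a ∈ P, ∀ b ∈ P, ∀ q : Q, E (a * q * b) = a * E q * b)
    (hEstar : ∀ x : Q, E (star x) = star (E x))
    (hZ : ∀ z ∈ P, (∀ p ∈ P, Commute z p) → ∃ s : ℂ, z = s • (1 : Q))
    (u : Q) (hu₁ : star u * u = 1) (hu₂ : u * star u = 1)
    (hconj : ∀ p ∈ P, u * p * star u ∈ P) (hEu : E u ≠ 0) :
    ∃ (a b : Q) (c : ℝ), 0 < c ∧
      a ∈ P ∧ (∀ p ∈ P, Commute b p) ∧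
      star a * a = 1 ∧ a * star a = 1 ∧
      star b * b = 1 ∧ b * star b = 1 ∧
      u = a * b ∧
      star (E u) * E u = ((c : ℂ)) • (1 : Q) ∧
      a = ((Real.sqrt c)⁻¹ : ℂ) • E u := by
  have hPstar : ∀ p ∈ (P : Set Q), star p ∈ (P : Set Q) := fun p hp =>
    Subalgebra.star_mem_of_star_retraction hrange hid hEstar hp
  have hw : ∀ p ∈ (P : Set Q), Commute (star u * E u) p := fun p hp =>
    commute_star_mul_apply_self hbimod hu₁ hconj hp
  have hw' : ∀ p ∈ (P : Set Q), Commute (star (star u * E u)) p := fun p hp =>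
    commute_star_of_forall_star_mem hPstar hw hp
  have hsq : star (E u) * E u = star (star u * E u) * (star u * E u) := by
    rw [star_mul, star_star, mul_assoc, ← mul_assoc u, hu₂, one_mul]
  obtain ⟨s, hs⟩ := hZ _ (P.mul_mem (hPstar _ (hrange u)) (hrange u)) fun p hp => by
    rw [hsq]; exact (hw' p hp).mul_left (hw p hp)
  obtain ⟨c, hc, hEc⟩ := exists_pos_of_star_mul_self_eq_smul_one τ hτ1 hpos hfaith hEu hs
  set a := ((Real.sqrt c)⁻¹ : ℂ) • E u
  have haa : star a * a = 1 := star_mul_self_inv_sqrt_smul_eq_one hc hEc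
  have haa' : a * star a = 1 :=
    mul_star_self_eq_one_of_star_mul_self_eq_one τ htrace hfaith haa
  have hb : star a * u ∈ unitary Q :=
    Submonoid.mul_mem _ (Unitary.star_mem ⟨haa, haa'⟩) ⟨hu₁, hu₂⟩
  refine ⟨a, star a * u, c, hc, P.smul_mem (hrange u) _, fun p hp => ?_, haa, haa', hb.1, hb.2,
    by rw [← mul_assoc, haa', one_mul], hEc, rfl⟩
  have hb_eq : star a * u = star ((Real.sqrt c)⁻¹ : ℂ) • star (star u * E u) := by
    rw [star_mul, star_star, star_smul, smul_mul_assoc]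
  rw [hb_eq]
  exact (hw' p hp).smul_left _

/-- Unitary factorization. Let P ⊆ Q with faithful positive tracial
state τ and τ-preserving conditional expectation E, u a unitary with uPu* ⊆ P,
P ∩ (P' ∩ Q) = ℂ·1, and E(u) ≠ 0. Then u = a·b with a a unitary in P,
b a unitary in P' ∩ Q, and explicitly a = c^{-1/2}·E(u) where
E(u)*E(u) = c·1 for a positive real scalar c. -/
theorem stmt8 {Q : Type*} [Ring Q] [Algebra ℂ Q] [StarRing Q] [StarModule ℂ Q]
    (P : Subalgebra ℂ Q)
    (τ : Q →ₗ[ℂ] ℂ) (hτ1 : τ 1 = 1)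
    (htrace : ∀ a b : Q, τ (a * b) = τ (b * a))
    (hpos : ∀ x : Q, 0 ≤ (τ (star x * x)).re ∧ (τ (star x * x)).im = 0)
    (hfaith : ∀ x : Q, τ (star x * x) = 0 → x = 0)
    (E : Q →ₗ[ℂ] Q) (hτE : ∀ x : Q, τ (E x) = τ x)
    (hrange : ∀ q : Q, E q ∈ P) (hid : ∀ p ∈ P, E p = p)
    (hbimod : ∀ a ∈ P, ∀ b ∈ P, ∀ q : Q, E (a * q * b) = a * E q * b)
    (hEstar : ∀ x : Q, E (star x) = star (E x))
    (hZ : ∀ z ∈ P, (∀ p ∈ P, Commute z p) → ∃ s : ℂ, z = s • (1 : Q))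
    (u : Q) (hu₁ : star u * u = 1) (hu₂ : u * star u = 1)
    (hconj : ∀ p ∈ P, u * p * star u ∈ P) (hEu : E u ≠ 0) :
    ∃ (a b : Q) (c : ℝ), 0 < c ∧
      a ∈ P ∧ (∀ p ∈ P, Commute b p) ∧
      star a * a = 1 ∧ a * star a = 1 ∧
      star b * b = 1 ∧ b * star b = 1 ∧
      u = a * b ∧
      star (E u) * E u = ((c : ℂ)) • (1 : Q) ∧
      a = ((Real.sqrt c)⁻¹ : ℂ) • E u :=
  stmt8_general P τ hτ1 htrace hpos hfaith E hrange hid hbimod hEstar hZ u hu₁ hu₂ hconj hEu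
end

section
/- Let Γ be a group, g ∈ Γ, and n₀ ∈ Γ an element not commuting with g (n₀ ∉ C_Γ(g)). Let F ⊆ Γ be a finite set containing g, and set Z = {sg⁻¹ : s ∈ F\{g}}. Suppose n₀ satisfies n₀ Z n₀⁻¹ ∩ Z = ∅. Then for s, t ∈ F, the equation s⁻¹ n₀ t n₀⁻¹ = g⁻¹ n₀ g n₀⁻¹ holds if and only if s = t = g. -/
theorem inv_mul_conj_eq_inv_mul_conj_iff {G : Type*} [Group G] (g n s t : G) :
    s⁻¹ * n * t * n⁻¹ = g⁻¹ * n * g * n⁻¹ ↔ n * (t * g⁻¹) * n⁻¹ = s * g⁻¹ := by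
  constructor <;> intro h
  · calc n * (t * g⁻¹) * n⁻¹ = s * (s⁻¹ * n * t * n⁻¹) * (n * g⁻¹ * n⁻¹) := by group
      _ = s * g⁻¹ := by rw [h]; group
  · calc s⁻¹ * n * t * n⁻¹ = s⁻¹ * (n * (t * g⁻¹) * n⁻¹) * (n * g * n⁻¹) := by group
      _ = g⁻¹ * n * g * n⁻¹ := by rw [h]; group

theorem stmt19_general {Γ : Type*} [Group Γ] (g n₀ : Γ) (F : Finset Γ)
    (hdisj : ∀ z ∈ {z : Γ | ∃ s ∈ F, s ≠ g ∧ z = s * g⁻¹},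
      n₀ * z * n₀⁻¹ ∉ {z : Γ | ∃ s ∈ F, s ≠ g ∧ z = s * g⁻¹}) :
    ∀ s ∈ F, ∀ t ∈ F,
      (s⁻¹ * n₀ * t * n₀⁻¹ = g⁻¹ * n₀ * g * n₀⁻¹ ↔ s = g ∧ t = g) := by
  intro s hs t ht
  rw [inv_mul_conj_eq_inv_mul_conj_iff]
  constructor
  · intro h
    by_cases htg : t = g
    · subst htg
      simpa [eq_comm, mul_inv_eq_one] using h
    by_cases hsg : s = g
    · subst hsg
      simp [mul_inv_eq_one, htg] at h
    exact absurd ⟨s, hs, hsg, h⟩ (hdisj _ ⟨t, ht, htg, rfl⟩)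
  · rintro ⟨rfl, rfl⟩
    simp

/-- Let g ∈ F ⊆ Γ (F finite), Z = {sg⁻¹ : s ∈ F \ {g}}, and let n₀ be
an element not commuting with g such that n₀Zn₀⁻¹ ∩ Z = ∅. Then for s, t ∈ F,
s⁻¹n₀tn₀⁻¹ = g⁻¹n₀gn₀⁻¹ if and only if s = t = g. -/
theorem stmt19 {Γ : Type*} [Group Γ] (g n₀ : Γ) (F : Finset Γ) (hgF : g ∈ F)
    (hn₀ : n₀ * g ≠ g * n₀)
    (hdisj : ∀ z ∈ {z : Γ | ∃ s ∈ F, s ≠ g ∧ z = s * g⁻¹},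
      n₀ * z * n₀⁻¹ ∉ {z : Γ | ∃ s ∈ F, s ≠ g ∧ z = s * g⁻¹}) :
    ∀ s ∈ F, ∀ t ∈ F,
      (s⁻¹ * n₀ * t * n₀⁻¹ = g⁻¹ * n₀ * g * n₀⁻¹ ↔ s = g ∧ t = g) :=
  stmt19_general g n₀ F hdisj
end
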